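/- With v_{a,b} = 2^{−n/2}(exp((2πi/4)·tr((a+2b)x)))_{x ∈ T_n}, if a ≠ a' in T_n then |⟨v_{a,b}, v_{a',b'}⟩|² = 2^{−n} for all b, b' ∈ T_n; that is, M_a and M_{a'} are mutually unbiased bases of ℂ^{2ⁿ}. -/

import Mathlib

open scoped InnerProductSpace

/-- The Galois ring `GR(4,n) = ℤ₄[x]/⟨h(x)⟩`. -/
noncomputable abbrev GR (h : Polynomial (ZMod 4)) : Type :=
  Polynomial (ZMod 4) ⧸ Ideal.span {h}

/-- `ξ = x + ⟨h(x)⟩ ∈ GR(4,n)`. -/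
noncomputable def xi (h : Polynomial (ZMod 4)) : GR h :=
  Ideal.Quotient.mk (Ideal.span {h}) Polynomial.X

open Classical in
/-- The Teichmüller set `T_n = {0, 1, ξ, …, ξ^{2ⁿ−2}}`. -/
noncomputable def Teich (n : ℕ) (h : Polynomial (ZMod 4)) : Finset (GR h) :=
  insert 0 ((Finset.range (2 ^ n - 1)).image fun k => xi h ^ k)

/-- `h` is a monic basic primitive polynomial of degree `n`: it is monic of
degree `n`, its reduction mod 2 is a primitive polynomial over `ℤ₂`
(irreducible, with root `x` of multiplicative order `2ⁿ − 1`), and consequently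
`ξ` has multiplicative order `2ⁿ − 1` in `GR(4,n)`. -/
structure IsBasicPrimitive (n : ℕ) (h : Polynomial (ZMod 4)) : Prop where
  monic : h.Monic
  deg : h.natDegree = n
  irred : Irreducible (h.map (ZMod.castHom (by norm_num : (2:ℕ) ∣ 4) (ZMod 2)))
  prim : orderOf (Ideal.Quotient.mk
      (Ideal.span {h.map (ZMod.castHom (by norm_num : (2:ℕ) ∣ 4) (ZMod 2))})
      Polynomial.X) = 2 ^ n - 1
  xi_order : orderOf (xi h) = 2 ^ n - 1

/-- The vector `v_{a,b} = 2^{−n/2} (exp((2πi/4)·tr((a+2b)x)))_{x ∈ T_n}` of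
`ℂ^{2ⁿ}`, indexed by the Teichmüller set `T_n`. -/
noncomputable def mv (n : ℕ) (h : Polynomial (ZMod 4)) (tr : GR h → ZMod 4)
    (a b : GR h) : EuclideanSpace ℂ (Teich n h) :=
  WithLp.toLp 2 fun x => (1 / Real.sqrt (2 ^ n) : ℂ) *
    Complex.exp (2 * Real.pi * Complex.I *
      ((tr ((a + 2 * b) * (x : GR h))).val : ℂ) / 4)

/-!
Put `c = (a' + 2b') - (a + 2b)` and let `ψ` be the standard character of `ℤ₄`. Then
`⟪v_{a,b}, v_{a',b'}⟫ = 2⁻ⁿ ∑_{x ∈ T} ψ(tr(c x))`, and `c` is nonzero modulo 2 because distinct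
Teichmüller elements stay distinct in the residue field `𝔽_{2ⁿ}`. So it suffices that this
Gauss sum `S` satisfies `|S|² = 2ⁿ`.

On `T`, Teichmüller addition `s ⊕ t = (√s + √t)² = s + t + 2√(st)` lifts the addition of
`𝔽_{2ⁿ}`. Writing `x = u ⊕ y` in `|S|² = ∑_{x,y ∈ T} ψ(tr(c(x - y)))` gives
`∑_u ψ(tr(cu)) ∑_y ψ(2 tr(c√(uy)))`. For `u ≠ 0` the map `y ↦ √(uy)` permutes `T`, and
`t ↦ ψ(2 tr(ct))` is a nontrivial character of `(T, ⊕)`: modulo 2, `tr` is the trace of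
`𝔽_{2ⁿ}/𝔽₂`, which is surjective. So only `u = 0` contributes, and it contributes `2ⁿ`.
-/

open Finset

namespace GR

abbrev ResidueField (h : Polynomial (ZMod 4)) : Type :=
  AdjoinRoot (h.map (ZMod.castHom (by norm_num : (2:ℕ) ∣ 4) (ZMod 2)))

noncomputable def residue (h : Polynomial (ZMod 4)) : GR h →+* ResidueField h :=
  AdjoinRoot.map _ h _ dvd_rfl

variable {n : ℕ} {h : Polynomial (ZMod 4)}

lemma four_eq_zero : (4 : GR h) = 0 := by
  rw [← map_ofNat (algebraMap (ZMod 4) (GR h)) 4, show (OfNat.ofNat 4 : ZMod 4) = 0 from rfl,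
    map_zero]

lemma residueField_two_eq_zero : (2 : ResidueField h) = 0 := by
  rw [← map_ofNat (algebraMap (ZMod 2) (ResidueField h)) 2,
    show (OfNat.ofNat 2 : ZMod 2) = 0 from rfl, map_zero]

lemma residue_two : residue h 2 = 0 := by
  rw [map_ofNat, residueField_two_eq_zero]

lemma residue_add_two_mul (a b : GR h) : residue h (a + 2 * b) = residue h a := by
  rw [map_add, map_mul, residue_two, zero_mul, add_zero]

lemma residue_xi : residue h (xi h) = AdjoinRoot.root _ :=
  AdjoinRoot.map_root _ _ _ _

lemma add_two_mul_sq (a b : GR h) : (a + 2 * b) ^ 2 = a ^ 2 := by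
  linear_combination (a * b + b ^ 2) * four_eq_zero (h := h)

end GR

namespace IsBasicPrimitive

open GR

variable {n : ℕ} {h : Polynomial (ZMod 4)} (hbp : IsBasicPrimitive n h)
include hbp

lemma fact_irreducible :
    Fact (Irreducible (h.map (ZMod.castHom (by norm_num : (2:ℕ) ∣ 4) (ZMod 2)))) :=
  ⟨hbp.irred⟩

lemma pos : 0 < n := by
  have := hbp.irred.natDegree_pos
  rwa [hbp.monic.natDegree_map, hbp.deg] at this

lemma one_lt_two_pow : 1 < 2 ^ n := Nat.one_lt_two_pow hbp.pos.ne'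

lemma finrank_residueField : Module.finrank (ZMod 2) (ResidueField h) = n := by
  have := hbp.fact_irreducible
  rw [(AdjoinRoot.powerBasis' (hbp.monic.map _)).finrank, AdjoinRoot.powerBasis'_dim,
    hbp.monic.natDegree_map, hbp.deg]

noncomputable def basis : Module.Basis (Fin h.natDegree) (ZMod 4) (GR h) :=
  (AdjoinRoot.powerBasis' hbp.monic).basis

lemma finite_GR : Finite (GR h) := Finite.of_equiv _ hbp.basis.equivFun.toEquiv.symm

lemma natCard_GR : Nat.card (GR h) = 4 ^ n := by
  rw [Nat.card_congr hbp.basis.equivFun.toEquiv, Nat.card_fun, Nat.card_zmod, Nat.card_fin,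
    hbp.deg]

lemma natCard_residueField : Nat.card (ResidueField h) = 2 ^ n := by
  rw [Nat.card_congr (AdjoinRoot.powerBasis' (hbp.monic.map _)).basis.equivFun.toEquiv,
    Nat.card_fun, Nat.card_zmod, Nat.card_fin, AdjoinRoot.powerBasis'_dim,
    hbp.monic.natDegree_map, hbp.deg]

lemma finite_residueField : Finite (ResidueField h) :=
  Nat.finite_of_card_ne_zero (by simp [hbp.natCard_residueField])

lemma algebraMap_injective : Function.Injective (algebraMap (ZMod 4) (GR h)) := by
  have := hbp.fact_irreducible
  have : Module.Free (ZMod 4) (GR h) := .of_basis hbp.basis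
  have : Nontrivial (GR h) := (residue h).domain_nontrivial
  exact FaithfulSMul.algebraMap_injective _ _

lemma exists_eq_two_mul_of_two_mul_eq_zero {z : GR h} (hz : 2 * z = 0) : ∃ w, z = 2 * w := by
  have hcoord (i) : ∃ d : ZMod 4, hbp.basis.repr z i = 2 * d := by
    have : 2 * hbp.basis.repr z i = 0 := by
      simpa [two_mul] using congrArg (hbp.basis.repr · i) hz
    revert this
    generalize hbp.basis.repr z i = c
    revert c
    decide
  choose d hd using hcoord
  refine ⟨∑ i, d i • hbp.basis i, ?_⟩
  conv_lhs => rw [← hbp.basis.sum_repr z]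
  simp only [mul_sum, hd]
  exact sum_congr rfl fun i _ => by rw [mul_smul, two_smul, mul_smul_comm, two_mul, smul_add]

lemma orderOf_root : orderOf (AdjoinRoot.root _ : ResidueField h) = 2 ^ n - 1 :=
  hbp.prim

lemma isOfFinOrder_xi : IsOfFinOrder (xi h) := by
  rw [← orderOf_pos_iff, hbp.xi_order]
  have := hbp.one_lt_two_pow
  omega

lemma isOfFinOrder_root : IsOfFinOrder (AdjoinRoot.root _ : ResidueField h) := by
  rw [← orderOf_pos_iff, hbp.orderOf_root]
  have := hbp.one_lt_two_pow
  omega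

lemma xi_pow_mem_teich (k : ℕ) : xi h ^ k ∈ Teich n h := by
  classical
  simp only [Teich, mem_insert, mem_image, mem_range]
  refine Or.inr ⟨k % orderOf (xi h), ?_, pow_mod_orderOf _ _⟩
  exact hbp.xi_order ▸ Nat.mod_lt _ hbp.isOfFinOrder_xi.orderOf_pos

lemma mem_teich_iff {t : GR h} : t ∈ Teich n h ↔ t = 0 ∨ ∃ k : ℕ, t = xi h ^ k := by
  classical
  refine ⟨fun ht => ?_, ?_⟩
  · simp only [Teich, mem_insert, mem_image, mem_range] at ht
    obtain rfl | ⟨k, -, rfl⟩ := ht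
    exacts [Or.inl rfl, Or.inr ⟨k, rfl⟩]
  · rintro (rfl | ⟨k, rfl⟩)
    exacts [mem_insert_self _ _, hbp.xi_pow_mem_teich k]

lemma zero_mem_teich : (0 : GR h) ∈ Teich n h := hbp.mem_teich_iff.2 (Or.inl rfl)

lemma mul_mem_teich {s t : GR h} (hs : s ∈ Teich n h) (ht : t ∈ Teich n h) :
    s * t ∈ Teich n h := by
  obtain rfl | ⟨j, rfl⟩ := hbp.mem_teich_iff.1 hs
  · simpa using hbp.zero_mem_teich
  obtain rfl | ⟨k, rfl⟩ := hbp.mem_teich_iff.1 ht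
  · simpa using hbp.zero_mem_teich
  · simpa [← pow_add] using hbp.xi_pow_mem_teich (j + k)

lemma pow_mem_teich {t : GR h} (ht : t ∈ Teich n h) (m : ℕ) : t ^ m ∈ Teich n h := by
  induction m with
  | zero => simpa using hbp.xi_pow_mem_teich 0
  | succ m ih => simpa [pow_succ] using hbp.mul_mem_teich ih ht

lemma xi_pow_two_pow : xi h ^ 2 ^ n = xi h := by
  rw [← Nat.sub_add_cancel hbp.one_lt_two_pow.le, pow_succ, ← hbp.xi_order, pow_orderOf_eq_one,
    one_mul]

lemma pow_two_pow_of_mem_teich {t : GR h} (ht : t ∈ Teich n h) : t ^ 2 ^ n = t := by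
  obtain rfl | ⟨k, rfl⟩ := hbp.mem_teich_iff.1 ht
  · exact zero_pow (by positivity)
  · rw [← pow_mul, mul_comm, pow_mul, hbp.xi_pow_two_pow]

lemma residue_injOn_teich : Set.InjOn (residue h) (Teich n h) := by
  have := hbp.fact_irreducible
  have hne (k : ℕ) : residue h (xi h ^ k) ≠ 0 := by
    rw [map_pow, residue_xi]
    exact (hbp.isOfFinOrder_root.isUnit.pow k).ne_zero
  intro s hs t ht hst
  obtain rfl | ⟨j, rfl⟩ := hbp.mem_teich_iff.1 hs <;>
    obtain rfl | ⟨k, rfl⟩ := hbp.mem_teich_iff.1 ht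
  · rfl
  · exact absurd hst.symm (by simpa using hne k)
  · exact absurd hst (by simpa using hne j)
  · rw [map_pow, map_pow, residue_xi, hbp.isOfFinOrder_root.pow_eq_pow_iff_modEq,
      hbp.orderOf_root] at hst
    rwa [hbp.isOfFinOrder_xi.pow_eq_pow_iff_modEq, hbp.xi_order]

lemma card_teich : #(Teich n h) = 2 ^ n := by
  classical
  have := hbp.fact_irreducible
  have : Nontrivial (GR h) := (residue h).domain_nontrivial
  rw [Teich, card_insert_of_notMem, card_image_of_injOn, card_range,
    Nat.sub_add_cancel hbp.one_lt_two_pow.le]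
  · rw [coe_range, ← hbp.xi_order]
    exact pow_injOn_Iio_orderOf
  · simp only [mem_image, not_exists, not_and]
    exact fun k _ => (hbp.isOfFinOrder_xi.isUnit.pow k).ne_zero

lemma residue_surjOn_teich : Set.SurjOn (residue h) (Teich n h) Set.univ := by
  classical
  have := hbp.finite_residueField
  have := Fintype.ofFinite (ResidueField h)
  simpa using surjOn_of_injOn_of_card_le (t := univ) _ (fun _ _ => mem_univ _)
    hbp.residue_injOn_teich (by rw [card_univ, ← Nat.card_eq_fintype_card,
      hbp.natCard_residueField, hbp.card_teich])

lemma two_mul_injOn_teich : Set.InjOn (2 * · : GR h → GR h) (Teich n h) := by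
  intro s hs t ht hst
  obtain ⟨w, hw⟩ := hbp.exists_eq_two_mul_of_two_mul_eq_zero (z := s - t) (by
    simp only at hst
    rw [mul_sub, hst, sub_self])
  refine hbp.residue_injOn_teich hs ht ?_
  rw [← sub_eq_zero, ← map_sub, hw, map_mul, residue_two, zero_mul]

lemma exists_teich_add_two_mul (z : GR h) :
    ∃ a ∈ Teich n h, ∃ b ∈ Teich n h, z = a + 2 * b := by
  classical
  have := hbp.finite_GR
  have := Fintype.ofFinite (GR h)
  have hinj : Set.InjOn (fun p : GR h × GR h => p.1 + 2 * p.2) ↑(Teich n h ×ˢ Teich n h) := by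
    rintro ⟨a, b⟩ hab ⟨a', b'⟩ hab' heq
    simp only [coe_product, Set.mem_prod, mem_coe] at hab hab' heq
    have ha : a = a' := hbp.residue_injOn_teich hab.1 hab'.1 (by
      simpa [residue_add_two_mul] using congrArg (residue h) heq)
    subst ha
    exact Prod.ext rfl (hbp.two_mul_injOn_teich hab.2 hab'.2 (add_left_cancel heq))
  obtain ⟨⟨a, b⟩, hab, rfl⟩ := surjOn_of_injOn_of_card_le (t := univ) _ (fun _ _ => mem_univ _)
    hinj (by rw [card_univ, ← Nat.card_eq_fintype_card, hbp.natCard_GR, card_product,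
      hbp.card_teich, ← mul_pow]; norm_num) (mem_univ z)
  rw [mem_coe, mem_product] at hab
  exact ⟨a, hab.1, b, hab.2, rfl⟩

lemma sq_mem_teich (z : GR h) : z ^ 2 ∈ Teich n h := by
  obtain ⟨a, ha, b, -, rfl⟩ := hbp.exists_teich_add_two_mul z
  rw [add_two_mul_sq]
  exact hbp.pow_mem_teich ha 2

end IsBasicPrimitive

namespace GR

variable {n : ℕ} {h : Polynomial (ZMod 4)}

noncomputable def teichSqrt (n : ℕ) (t : GR h) : GR h := t ^ 2 ^ (n - 1)

-- Teichmüller addition: the element of `T` with the same residue as `s + t`.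
noncomputable def teichAdd (n : ℕ) (s t : GR h) : GR h := (teichSqrt n s + teichSqrt n t) ^ 2

lemma teichSqrt_zero : teichSqrt n (0 : GR h) = 0 := zero_pow (by positivity)

end GR

namespace IsBasicPrimitive

open GR

variable {n : ℕ} {h : Polynomial (ZMod 4)} (hbp : IsBasicPrimitive n h)
include hbp

lemma teichSqrt_mem {t : GR h} (ht : t ∈ Teich n h) : teichSqrt n t ∈ Teich n h :=
  hbp.pow_mem_teich ht _

lemma pow_two_pow_pred_mul_two (t : GR h) : t ^ (2 ^ (n - 1) * 2) = t ^ 2 ^ n := by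
  rw [← pow_succ, Nat.sub_add_cancel hbp.pos]

lemma sq_teichSqrt {t : GR h} (ht : t ∈ Teich n h) : teichSqrt n t ^ 2 = t := by
  rw [teichSqrt, ← pow_mul, hbp.pow_two_pow_pred_mul_two, hbp.pow_two_pow_of_mem_teich ht]

lemma teichSqrt_sq {t : GR h} (ht : t ∈ Teich n h) : teichSqrt n (t ^ 2) = t := by
  rw [teichSqrt, ← pow_mul, mul_comm, hbp.pow_two_pow_pred_mul_two,
    hbp.pow_two_pow_of_mem_teich ht]

lemma teichAdd_mem (s t : GR h) : teichAdd n s t ∈ Teich n h := hbp.sq_mem_teich _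

lemma teichAdd_eq {s t : GR h} (hs : s ∈ Teich n h) (ht : t ∈ Teich n h) :
    teichAdd n s t = s + t + 2 * teichSqrt n (s * t) := by
  rw [teichAdd, add_sq, hbp.sq_teichSqrt hs, hbp.sq_teichSqrt ht, teichSqrt, teichSqrt, teichSqrt,
    mul_pow]
  ring

lemma residue_teichAdd {s t : GR h} (hs : s ∈ Teich n h) (ht : t ∈ Teich n h) :
    residue h (teichAdd n s t) = residue h s + residue h t := by
  rw [hbp.teichAdd_eq hs ht, residue_add_two_mul, map_add]

lemma teichAdd_teichAdd_self {s t : GR h} (hs : s ∈ Teich n h) (ht : t ∈ Teich n h) :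
    teichAdd n (teichAdd n s t) t = s := by
  refine hbp.residue_injOn_teich (hbp.teichAdd_mem _ _) hs ?_
  rw [hbp.residue_teichAdd (hbp.teichAdd_mem _ _) ht, hbp.residue_teichAdd hs ht]
  linear_combination residue h t * residueField_two_eq_zero (h := h)

lemma sum_teichAdd_right {M : Type*} [AddCommMonoid M] (f : GR h → M) {t : GR h}
    (ht : t ∈ Teich n h) : ∑ s ∈ Teich n h, f (teichAdd n s t) = ∑ s ∈ Teich n h, f s :=
  sum_nbij' (teichAdd n · t) (teichAdd n · t) (fun s _ => hbp.teichAdd_mem s t)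
    (fun s _ => hbp.teichAdd_mem s t) (fun _ hs => hbp.teichAdd_teichAdd_self hs ht)
    (fun _ hs => hbp.teichAdd_teichAdd_self hs ht) (fun _ _ => rfl)

lemma exists_mul_eq_one {u : GR h} (hu : u ∈ Teich n h) (hu0 : u ≠ 0) :
    ∃ w ∈ Teich n h, w * u = 1 := by
  obtain ⟨k, rfl⟩ := (hbp.mem_teich_iff.1 hu).resolve_left hu0
  have := hbp.one_lt_two_pow
  refine ⟨(xi h ^ k) ^ (2 ^ n - 2), hbp.pow_mem_teich hu _, ?_⟩
  rw [← pow_succ, ← pow_mul, mul_comm, pow_mul, show 2 ^ n - 2 + 1 = 2 ^ n - 1 by omega,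
    ← hbp.xi_order, pow_orderOf_eq_one, one_pow]

lemma sum_teichSqrt_mul {M : Type*} [AddCommMonoid M] (f : GR h → M) {u : GR h}
    (hu : u ∈ Teich n h) (hu0 : u ≠ 0) :
    ∑ y ∈ Teich n h, f (teichSqrt n (u * y)) = ∑ t ∈ Teich n h, f t := by
  obtain ⟨w, hw, hwu⟩ := hbp.exists_mul_eq_one hu hu0
  refine sum_nbij' (fun y => teichSqrt n (u * y)) (fun t => w * t ^ 2)
    (fun y hy => hbp.teichSqrt_mem (hbp.mul_mem_teich hu hy))
    (fun t ht => hbp.mul_mem_teich hw (hbp.pow_mem_teich ht 2)) (fun y hy => ?_) (fun t ht => ?_)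
    (fun _ _ => rfl)
  · rw [hbp.sq_teichSqrt (hbp.mul_mem_teich hu hy), ← mul_assoc, hwu, one_mul]
  · rw [← mul_assoc, mul_comm u, hwu, one_mul, hbp.teichSqrt_sq ht]

section GaussSum

variable (ψ : AddChar (GR h) ℂ)

lemma sum_addChar_two_mul_eq_zero {t₀ : GR h} (ht₀ : t₀ ∈ Teich n h) (hψ : ψ (2 * t₀) ≠ 1) :
    ∑ t ∈ Teich n h, ψ (2 * t) = 0 := by
  have hshift : ∑ t ∈ Teich n h, ψ (2 * t) = ψ (2 * t₀) * ∑ t ∈ Teich n h, ψ (2 * t) := by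
    calc ∑ t ∈ Teich n h, ψ (2 * t)
        = ∑ t ∈ Teich n h, ψ (2 * teichAdd n t t₀) := (hbp.sum_teichAdd_right _ ht₀).symm
      _ = ∑ t ∈ Teich n h, ψ (2 * t₀) * ψ (2 * t) := sum_congr rfl fun t ht => by
          rw [hbp.teichAdd_eq ht ht₀, ← AddChar.map_add_eq_mul]
          congr 1
          linear_combination teichSqrt n (t * t₀) * four_eq_zero (h := h)
      _ = ψ (2 * t₀) * ∑ t ∈ Teich n h, ψ (2 * t) := (mul_sum _ _ _).symm
  have : (1 - ψ (2 * t₀)) * ∑ t ∈ Teich n h, ψ (2 * t) = 0 := by linear_combination hshift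
  exact (mul_eq_zero.1 this).resolve_left (sub_ne_zero.2 hψ.symm)

theorem sq_norm_sum_addChar {t₀ : GR h} (ht₀ : t₀ ∈ Teich n h) (hψ : ψ (2 * t₀) ≠ 1) :
    ‖∑ x ∈ Teich n h, ψ x‖ ^ 2 = 2 ^ n := by
  have := hbp.finite_GR
  have hsub (x y : GR h) : ψ x * starRingEnd ℂ (ψ y) = ψ (x - y) := by
    rw [sub_eq_add_neg, AddChar.map_add_eq_mul, AddChar.map_neg_eq_conj]
  have hinner (u : GR h) (hu : u ∈ Teich n h) (hu0 : u ≠ 0) :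
      ∑ y ∈ Teich n h, ψ (2 * teichSqrt n (u * y)) = 0 := by
    rw [hbp.sum_teichSqrt_mul (fun t => ψ (2 * t)) hu hu0]
    exact hbp.sum_addChar_two_mul_eq_zero ψ ht₀ hψ
  suffices (∑ x ∈ Teich n h, ψ x) * starRingEnd ℂ (∑ x ∈ Teich n h, ψ x) = 2 ^ n by
    exact_mod_cast (Complex.mul_conj' _).symm.trans this
  calc (∑ x ∈ Teich n h, ψ x) * starRingEnd ℂ (∑ x ∈ Teich n h, ψ x)
      = ∑ y ∈ Teich n h, ∑ x ∈ Teich n h, ψ (x - y) := by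
        rw [map_sum, sum_mul_sum, sum_comm]
        simp only [hsub]
    _ = ∑ y ∈ Teich n h, ∑ u ∈ Teich n h, ψ u * ψ (2 * teichSqrt n (u * y)) :=
        sum_congr rfl fun y hy => by
          rw [← hbp.sum_teichAdd_right _ hy]
          refine sum_congr rfl fun u hu => ?_
          rw [hbp.teichAdd_eq hu hy, ← AddChar.map_add_eq_mul]
          ring_nf
    _ = ∑ u ∈ Teich n h, ψ u * ∑ y ∈ Teich n h, ψ (2 * teichSqrt n (u * y)) := by
        rw [sum_comm]
        simp only [mul_sum]
    _ = ψ 0 * ∑ y ∈ Teich n h, ψ (2 * teichSqrt n (0 * y)) :=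
        sum_eq_single 0 (fun u hu hu0 => by rw [hinner u hu hu0, mul_zero])
          (fun h0 => absurd hbp.zero_mem_teich h0)
    _ = 2 ^ n := by simp [teichSqrt_zero, hbp.card_teich]

end GaussSum

end IsBasicPrimitive

namespace GR

variable {n : ℕ} {h : Polynomial (ZMod 4)}

def IsFrobenius (n : ℕ) (σ : GR h → GR h) : Prop :=
  ∀ a b : GR h, a ∈ Teich n h → b ∈ Teich n h → σ (a + 2 * b) = a ^ 2 + 2 * b ^ 2

namespace IsFrobenius

variable {σ : GR h → GR h} (hσ : IsFrobenius n σ) (hbp : IsBasicPrimitive n h)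
include hσ hbp

lemma apply_add_two_mul {a : GR h} (ha : a ∈ Teich n h) (w : GR h) :
    σ (a + 2 * w) = a ^ 2 + 2 * w ^ 2 := by
  obtain ⟨b, hb, e, -, rfl⟩ := hbp.exists_teich_add_two_mul w
  rw [show a + 2 * (b + 2 * e) = a + 2 * b by linear_combination e * four_eq_zero (h := h),
    hσ a b ha hb]
  linear_combination (-(2 * b * e + 2 * e ^ 2)) * four_eq_zero (h := h)

lemma map_add (z w : GR h) : σ (z + w) = σ z + σ w := by
  obtain ⟨a, ha, b, -, rfl⟩ := hbp.exists_teich_add_two_mul z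
  obtain ⟨c, hc, d, -, rfl⟩ := hbp.exists_teich_add_two_mul w
  set s := teichSqrt n (a * c)
  have hs : s ^ 2 = a * c := hbp.sq_teichSqrt (hbp.mul_mem_teich ha hc)
  rw [show a + 2 * b + (c + 2 * d) = teichAdd n a c + 2 * (b + d - s) by
      rw [hbp.teichAdd_eq ha hc]; ring,
    hσ.apply_add_two_mul hbp (hbp.teichAdd_mem a c), hσ.apply_add_two_mul hbp ha,
    hσ.apply_add_two_mul hbp hc, hbp.teichAdd_eq ha hc]
  linear_combination 2 * hs + (a * c + s * (a + c) + s ^ 2 + b * d - b * s - d * s) *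
    four_eq_zero (h := h)

lemma residue_apply (z : GR h) : residue h (σ z) = residue h z ^ 2 := by
  obtain ⟨a, ha, b, hb, rfl⟩ := hbp.exists_teich_add_two_mul z
  rw [hσ a b ha hb, residue_add_two_mul, residue_add_two_mul, map_pow]

lemma residue_iterate (k : ℕ) (z : GR h) : residue h (σ^[k] z) = residue h z ^ 2 ^ k := by
  induction k with
  | zero => simp
  | succ k ih => rw [Function.iterate_succ_apply', hσ.residue_apply hbp, ih, ← pow_mul, pow_succ]

variable {tr : GR h → ZMod 4}
  (htr : ∀ r : GR h, algebraMap (ZMod 4) (GR h) (tr r) = ∑ k ∈ range n, σ^[k] r)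
include htr

lemma trace_add (z w : GR h) : tr (z + w) = tr z + tr w := by
  apply hbp.algebraMap_injective
  rw [_root_.map_add, htr, htr, htr, ← sum_add_distrib]
  exact sum_congr rfl fun k _ => iterate_map_add (AddMonoidHom.mk' σ (hσ.map_add hbp)) k z w

lemma residue_trace (z : GR h) :
    ZMod.castHom (by norm_num : (2:ℕ) ∣ 4) (ZMod 2) (tr z) =
      Algebra.trace (ZMod 2) (ResidueField h) (residue h z) := by
  have := hbp.fact_irreducible
  have := hbp.finite_residueField
  apply (algebraMap (ZMod 2) (ResidueField h)).injective
  have hres : (residue h).comp (algebraMap (ZMod 4) (GR h)) =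
      (algebraMap (ZMod 2) (ResidueField h)).comp (ZMod.castHom (by norm_num) (ZMod 2)) :=
    Subsingleton.elim _ _
  rw [FiniteField.algebraMap_trace_eq_sum_pow, hbp.finrank_residueField, Nat.card_zmod,
    ← RingHom.comp_apply, ← hres, RingHom.comp_apply, htr, map_sum]
  exact sum_congr rfl fun k _ => hσ.residue_iterate hbp k z

end IsFrobenius

end GR

namespace IsBasicPrimitive

open GR

lemma exists_two_mul_trace_ne_zero {n : ℕ} {h : Polynomial (ZMod 4)}
    (hbp : IsBasicPrimitive n h) {σ : GR h → GR h} (hσ : IsFrobenius n σ)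
    {tr : GR h → ZMod 4}
    (htr : ∀ r : GR h, algebraMap (ZMod 4) (GR h) (tr r) = ∑ k ∈ range n, σ^[k] r)
    {c : GR h} (hc : residue h c ≠ 0) : ∃ t ∈ Teich n h, 2 * tr (c * t) ≠ 0 := by
  have := hbp.fact_irreducible
  have := hbp.finite_residueField
  obtain ⟨w, hw⟩ := Algebra.trace_surjective (ZMod 2) (ResidueField h) 1
  obtain ⟨t, ht, hwt⟩ := hbp.residue_surjOn_teich (Set.mem_univ (w / residue h c))
  refine ⟨t, ht, ?_⟩
  have hodd : ZMod.castHom (by norm_num : (2:ℕ) ∣ 4) (ZMod 2) (tr (c * t)) = 1 := by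
    rw [hσ.residue_trace hbp htr, map_mul, hwt, mul_div_cancel₀ _ hc, hw]
  revert hodd
  generalize tr (c * t) = m
  revert m
  decide

end IsBasicPrimitive

namespace GR

variable {n : ℕ} {h : Polynomial (ZMod 4)}

lemma mv_apply (tr : GR h → ZMod 4) (a b : GR h) (x : Teich n h) :
    mv n h tr a b x = (1 / Real.sqrt (2 ^ n) : ℂ) * ZMod.stdAddChar (tr ((a + 2 * b) * x)) := by
  simp [mv, ZMod.stdAddChar_apply, ZMod.toCircle_apply]

lemma inner_mv {tr : GR h → ZMod 4} (htr : ∀ z w, tr (z + w) = tr z + tr w) (a b a' b' : GR h) :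
    ⟪mv n h tr a b, mv n h tr a' b'⟫_ℂ =
      (2 ^ n : ℂ)⁻¹ * ∑ x ∈ Teich n h, ZMod.stdAddChar (tr ((a' + 2 * b' - (a + 2 * b)) * x)) := by
  have htr_sub (z w : GR h) : tr (z - w) = tr z - tr w := map_sub (AddMonoidHom.mk' tr htr) z w
  have hconj (m m' : ZMod 4) :
      ZMod.stdAddChar m' * starRingEnd ℂ (ZMod.stdAddChar m) = ZMod.stdAddChar (m' - m) := by
    rw [← AddChar.map_neg_eq_conj, ← AddChar.map_add_eq_mul, ← sub_eq_add_neg]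
  have hscale : (1 / Real.sqrt (2 ^ n) : ℂ) * starRingEnd ℂ (1 / Real.sqrt (2 ^ n) : ℂ) =
      (2 ^ n : ℂ)⁻¹ := by
    rw [map_div₀, map_one, Complex.conj_ofReal, div_mul_div_comm, one_mul, ← Complex.ofReal_mul,
      Real.mul_self_sqrt (by positivity)]
    push_cast
    exact one_div _
  rw [PiLp.inner_apply, mul_sum, ← sum_coe_sort (Teich n h)]
  refine sum_congr rfl fun x _ => ?_
  rw [RCLike.inner_apply, mv_apply, mv_apply, map_mul, mul_mul_mul_comm, hscale, hconj, sub_mul,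
    htr_sub]

end GR

theorem Ma_mutually_unbiased_general (n : ℕ) (h : Polynomial (ZMod 4))
    (hbp : IsBasicPrimitive n h)
    (σ : GR h → GR h)
    (hσ : ∀ a b : GR h, a ∈ Teich n h → b ∈ Teich n h →
      σ (a + 2 * b) = a ^ 2 + 2 * b ^ 2)
    (tr : GR h → ZMod 4)
    (htr : ∀ r : GR h,
      algebraMap (ZMod 4) (GR h) (tr r) = ∑ k ∈ Finset.range n, σ^[k] r)
    (a a' : GR h) (ha : a ∈ Teich n h) (ha' : a' ∈ Teich n h) (haa' : a ≠ a')
    (b b' : GR h) :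
    ‖⟪mv n h tr a b, mv n h tr a' b'⟫_ℂ‖ ^ 2 = 1 / 2 ^ n := by
  have htr_add := GR.IsFrobenius.trace_add hσ hbp htr
  set c := a' + 2 * b' - (a + 2 * b)
  have hc : GR.residue h c ≠ 0 := by
    rw [map_sub, GR.residue_add_two_mul, GR.residue_add_two_mul, sub_ne_zero]
    exact fun e => haa' (hbp.residue_injOn_teich ha ha' e.symm)
  obtain ⟨t₀, ht₀, htr₀⟩ := hbp.exists_two_mul_trace_ne_zero hσ htr hc
  let χ : AddChar (GR h) ℂ := ZMod.stdAddChar.compAddMonoidHom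
    ((AddMonoidHom.mk' tr htr_add).comp (AddMonoidHom.mulLeft c))
  have hχ : χ (2 * t₀) ≠ 1 := by
    change ZMod.stdAddChar (tr (c * (2 * t₀))) ≠ 1
    rw [mul_left_comm, two_mul, htr_add, ← two_mul,
      ← AddChar.map_zero_eq_one (ZMod.stdAddChar (N := 4))]
    exact ZMod.injective_stdAddChar.ne htr₀
  have hgauss : ‖∑ x ∈ Teich n h, ZMod.stdAddChar (tr (c * x))‖ ^ 2 = 2 ^ n :=
    hbp.sq_norm_sum_addChar χ ht₀ hχ
  rw [GR.inner_mv htr_add, norm_mul, mul_pow, hgauss, norm_inv, norm_pow, Complex.norm_ofNat]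
  field_simp

/-- If `a ≠ a'` in the Teichmüller set, then `|⟨v_{a,b}, v_{a',b'}⟩|² = 2^{−n}`
for all `b, b' ∈ T_n`: the bases `M_a` and `M_{a'}` are mutually unbiased.
Here `tr` is the trace map of `GR(4,n)`, `tr(x) = ∑_{k<n} σ^k(x)` with
Frobenius `σ(a+2b) = a² + 2b²`. -/
theorem Ma_mutually_unbiased (n : ℕ) (h : Polynomial (ZMod 4))
    (hbp : IsBasicPrimitive n h)
    (σ : GR h → GR h)
    (hσ : ∀ a b : GR h, a ∈ Teich n h → b ∈ Teich n h →
      σ (a + 2 * b) = a ^ 2 + 2 * b ^ 2)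
    (tr : GR h → ZMod 4)
    (htr : ∀ r : GR h,
      algebraMap (ZMod 4) (GR h) (tr r) = ∑ k ∈ Finset.range n, σ^[k] r)
    (a a' : GR h) (ha : a ∈ Teich n h) (ha' : a' ∈ Teich n h) (haa' : a ≠ a')
    (b b' : GR h) (hb : b ∈ Teich n h) (hb' : b' ∈ Teich n h) :
    ‖⟪mv n h tr a b, mv n h tr a' b'⟫_ℂ‖ ^ 2 = 1 / 2 ^ n :=
  Ma_mutually_unbiased_general n h hbp σ hσ tr htr a a' ha ha' haa' b b'
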